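/- For every natural number n ≥ 2, φ(n)³(ψ(n)+σ(n)) + ψ(n)³(φ(n)+σ(n)) + σ(n)³(φ(n)+ψ(n)) ≥ 6n⁴ + 8n³ + 12n² + 8n − 2. -/

import Mathlib

/-!
Euler's product formula `φ(n) ∏ p = n ∏ (p - 1)` and its analogue `ψ(n) ∏ p = n ∏ (p + 1)`
(products over the prime factors of `n`) give `φ(n) ≥ 1`, `ψ(n) ≥ n + 1` and
`φ(n) + ψ(n) ≥ 2n`, while comparing local factors gives `σ(n) ≥ ψ(n)`. The left-hand side is
increasing in each of `φ, ψ, σ`, and under these constraints it is smallest at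
`(φ, ψ, σ) = (n - 1, n + 1, n + 1)`, the values at a prime, where it equals the right-hand side.
-/

/-- The Dedekind psi function: ψ(p^a) = p^(a-1)(p+1), ψ(1) = 1, multiplicative. -/
def dpsi (n : ℕ) : ℕ := ∏ p ∈ n.primeFactors, p ^ (n.factorization p - 1) * (p + 1)

/-- Sum of divisors function. -/
def sigma1 (n : ℕ) : ℕ := ArithmeticFunction.sigma 1 n

open Finset

section OrderedRing

variable {R : Type*} [CommRing R] [LinearOrder R] [IsStrictOrderedRing R]

theorem Finset.two_mul_prod_le_prod_sub_add_prod_add {ι : Type*} (s : Finset ι) (f g : ι → R)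
    (hg : ∀ i ∈ s, 0 ≤ g i) (hgf : ∀ i ∈ s, g i ≤ f i) :
    2 * ∏ i ∈ s, f i ≤ ∏ i ∈ s, (f i - g i) + ∏ i ∈ s, (f i + g i) := by
  induction s using Finset.cons_induction with
  | empty => simp [one_add_one_eq_two]
  | cons i s hi ih =>
    simp only [forall_mem_cons] at hg hgf
    have hsub_le_add : ∏ j ∈ s, (f j - g j) ≤ ∏ j ∈ s, (f j + g j) :=
      prod_le_prod (fun j hj => sub_nonneg.2 (hgf.2 j hj)) fun j hj => by linarith [hg.2 j hj]
    rw [prod_cons, prod_cons, prod_cons]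
    -- `(f i - g i) Q + (f i + g i) P = f i (Q + P) + g i (P - Q)`, `Q ≤ P` the products over `s`
    nlinarith [mul_le_mul_of_nonneg_left (ih hg.2 hgf.2) (hg.1.trans hgf.1),
      mul_nonneg hg.1 (sub_nonneg.2 hsub_le_add)]

theorem add_pow_four_sub_two_mul_pow_four_le {n x y : R} (hx : 0 ≤ x) (hxy : x ≤ y)
    (hyn : y ≤ n) : (n + x) ^ 4 - 2 * x ^ 4 ≤ (n + y) ^ 4 - 2 * y ^ 4 := by
  have hS : 2 * (x ^ 3 + x ^ 2 * y + x * y ^ 2 + y ^ 3) ≤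
      (n + x) ^ 3 + (n + x) ^ 2 * (n + y) + (n + x) * (n + y) ^ 2 + (n + y) ^ 3 := by
    have h2y : 2 * y ≤ n + y := by linarith
    have : x ^ 3 + x ^ 2 * y + x * y ^ 2 + y ^ 3 ≤ 4 * y ^ 3 := by
      nlinarith [pow_le_pow_left₀ hx hxy 3, pow_le_pow_left₀ hx hxy 2,
        mul_le_mul_of_nonneg_right hxy (sq_nonneg y),
        mul_le_mul_of_nonneg_right (pow_le_pow_left₀ hx hxy 2) (hx.trans hxy)]
    nlinarith [pow_le_pow_left₀ (by linarith) h2y 3, pow_nonneg (by linarith : 0 ≤ n + x) 3,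
      mul_nonneg (pow_nonneg (by linarith : 0 ≤ n + x) 2) (by linarith : 0 ≤ n + y),
      mul_nonneg (by linarith : 0 ≤ n + x) (pow_nonneg (by linarith : 0 ≤ n + y) 2)]
  have hfactor : (n + y) ^ 4 - 2 * y ^ 4 - ((n + x) ^ 4 - 2 * x ^ 4) = (y - x) *
      ((n + x) ^ 3 + (n + x) ^ 2 * (n + y) + (n + x) * (n + y) ^ 2 + (n + y) ^ 3 -
        2 * (x ^ 3 + x ^ 2 * y + x * y ^ 2 + y ^ 3)) := by ring
  nlinarith [mul_nonneg (sub_nonneg.2 hxy) (sub_nonneg.2 hS)]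

theorem cyclic_quartic_mono_right {a b c : R} (ha : 0 ≤ a) (hb : 0 ≤ b) (hbc : b ≤ c) :
    a ^ 3 * (b + b) + b ^ 3 * (a + b) + b ^ 3 * (a + b) ≤
      a ^ 3 * (b + c) + b ^ 3 * (a + c) + c ^ 3 * (a + b) := by
  nlinarith [mul_nonneg (sub_nonneg.2 hbc) (add_nonneg (pow_nonneg ha 3) (pow_nonneg hb 3)),
    mul_nonneg (sub_nonneg.2 (pow_le_pow_left₀ hb hbc 3)) (add_nonneg ha hb)]

theorem le_cyclic_quartic {n a b c : R} (hn : 2 ≤ n) (ha : 1 ≤ a) (hb : n + 1 ≤ b) (hbc : b ≤ c)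
    (hab : 2 * n ≤ a + b) :
    6 * n ^ 4 + 8 * n ^ 3 + 12 * n ^ 2 + 8 * n - 2 ≤
      a ^ 3 * (b + c) + b ^ 3 * (a + c) + c ^ 3 * (a + b) := by
  have hn0 : 0 ≤ n := by linarith
  have hb0 : 0 ≤ b := by linarith
  have hc := cyclic_quartic_mono_right (a := a) (by linarith) hb0 hbc
  rcases le_total (2 * n) b with hb2 | hb2
  · have ha0 : 0 ≤ a := by linarith
    have hrest : 0 ≤ a ^ 3 * (b + b) + 2 * b ^ 3 * a := by positivity
    nlinarith [pow_le_pow_left₀ (by linarith) hb2 4,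
      mul_le_mul_of_nonneg_right hn (pow_nonneg hn0 3),
      mul_le_mul_of_nonneg_right hn (pow_nonneg hn0 2), mul_le_mul_of_nonneg_right hn hn0]
  · -- with `x = b - n`, the value at `a = 2n - b = n - x`, `c = b` is `4 n⁴ + 2 ((n + x)⁴ - 2 x⁴)`
    have ha₀ : 0 ≤ 2 * n - b := by linarith
    have hle : 2 * n - b ≤ a := by linarith
    have hmono := add_pow_four_sub_two_mul_pow_four_le (n := n) zero_le_one
      (le_sub_iff_add_le'.2 hb) (by linarith : b - n ≤ n)
    nlinarith [mul_le_mul_of_nonneg_left (pow_le_pow_left₀ ha₀ hle 3) hb0,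
      mul_le_mul_of_nonneg_left hle (pow_nonneg hb0 3)]

end OrderedRing

theorem Nat.factorization_pos_of_mem_primeFactors {n p : ℕ} (hp : p ∈ n.primeFactors) :
    0 < n.factorization p :=
  Nat.pos_of_ne_zero <| Finsupp.mem_support_iff.1 <| n.support_factorization ▸ hp

theorem dpsi_mul_prod_primeFactors {n : ℕ} (hn : n ≠ 0) :
    dpsi n * ∏ p ∈ n.primeFactors, p = n * ∏ p ∈ n.primeFactors, (p + 1) := calc
  _ = ∏ p ∈ n.primeFactors, p ^ n.factorization p * (p + 1) := by
    rw [dpsi, ← prod_mul_distrib]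
    refine prod_congr rfl fun p hp => ?_
    rw [mul_right_comm, ← pow_succ,
      Nat.sub_add_cancel (Nat.factorization_pos_of_mem_primeFactors hp)]
  _ = n * ∏ p ∈ n.primeFactors, (p + 1) := by
    rw [prod_mul_distrib, ← Nat.prod_primeFactors_pow_factorization hn]

theorem two_mul_prod_primeFactors_le (n : ℕ) :
    2 * ∏ p ∈ n.primeFactors, p ≤
      ∏ p ∈ n.primeFactors, (p - 1) + ∏ p ∈ n.primeFactors, (p + 1) := by
  have hcast :
      ((∏ p ∈ n.primeFactors, (p - 1) : ℕ) : ℤ) = ∏ p ∈ n.primeFactors, ((p : ℤ) - 1) := by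
    rw [Nat.cast_prod]
    exact prod_congr rfl fun p hp => Nat.cast_pred (Nat.pos_of_mem_primeFactors hp)
  rw [← Nat.cast_le (α := ℤ)]
  push_cast [hcast]
  exact two_mul_prod_le_prod_sub_add_prod_add _ _ _ (fun _ _ => zero_le_one)
    fun p hp => by exact_mod_cast (Nat.pos_of_mem_primeFactors hp)

theorem two_mul_le_totient_add_dpsi (n : ℕ) : 2 * n ≤ n.totient + dpsi n := by
  rcases eq_or_ne n 0 with rfl | hn
  · simp
  refine le_of_mul_le_mul_right (a := ∏ p ∈ n.primeFactors, p) ?_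
    (prod_pos fun p hp => Nat.pos_of_mem_primeFactors hp)
  rw [add_mul, Nat.totient_mul_prod_primeFactors, dpsi_mul_prod_primeFactors hn, ← mul_add,
    mul_comm 2, mul_assoc]
  exact Nat.mul_le_mul_left n (two_mul_prod_primeFactors_le n)

theorem lt_dpsi {n : ℕ} (hn : 1 < n) : n < dpsi n := by
  refine lt_of_mul_lt_mul_right ?_ (Nat.zero_le (∏ p ∈ n.primeFactors, p))
  rw [dpsi_mul_prod_primeFactors (by omega)]
  exact Nat.mul_lt_mul_of_pos_left (prod_lt_prod_of_nonempty
    (fun p hp => Nat.pos_of_mem_primeFactors hp) (fun p _ => lt_add_one p)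
    (Nat.nonempty_primeFactors.2 hn)) (by omega)

theorem dpsi_le_sigma1 {n : ℕ} (hn : n ≠ 0) : dpsi n ≤ sigma1 n := by
  rw [sigma1, ArithmeticFunction.isMultiplicative_sigma.multiplicative_factorization _ hn,
    Nat.prod_factorization_eq_prod_primeFactors]
  refine prod_le_prod' fun p hp => ?_
  obtain ⟨k, hk⟩ := Nat.exists_eq_add_one.2 (Nat.factorization_pos_of_mem_primeFactors hp)
  rw [hk, ArithmeticFunction.sigma_one_apply_prime_pow (Nat.prime_of_mem_primeFactors hp),
    Nat.add_sub_cancel, sum_range_succ, sum_range_succ, add_assoc, mul_add_one, ← pow_succ,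
    add_comm (p ^ (k + 1))]
  exact le_add_self

theorem stmt4 (n : ℕ) (hn : 2 ≤ n) :
    n.totient ^ 3 * (dpsi n + sigma1 n) + dpsi n ^ 3 * (n.totient + sigma1 n) +
      sigma1 n ^ 3 * (n.totient + dpsi n) ≥ 6 * n ^ 4 + 8 * n ^ 3 + 12 * n ^ 2 + 8 * n - 2 := by
  have hφ : 1 ≤ n.totient := Nat.totient_pos.2 (by omega)
  have hψ : n + 1 ≤ dpsi n := lt_dpsi hn
  have hσ : dpsi n ≤ sigma1 n := dpsi_le_sigma1 (by omega)
  have hφψ : 2 * n ≤ n.totient + dpsi n := two_mul_le_totient_add_dpsi n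
  rw [ge_iff_le, Nat.sub_le_iff_le_add]
  zify at hn hφ hψ hσ hφψ ⊢
  linarith [le_cyclic_quartic hn hφ hψ hσ hφψ]
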